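/- The 4-dimensional algebra T⁴₃₇ over ℂ with basis e₁,e₂,e₃,e₄ and nonzero products e₁e₁ = e₂, e₁e₂ = e₃, e₁e₃ = e₄, e₂e₁ = e₄ is a terminal algebra that is not a left Leibniz algebra, and it is a one-dimensional central extension of the algebra T³*₀₅ (basis e₁,e₂,e₃, e₁e₁ = e₂, e₁e₂ = e₃): namely T⁴₃₇ ≅ (T³*₀₅)_θ for θ = Δ₁₃ + Δ₂₁, where Δᵢⱼ(eₗ,eₘ) = δᵢₗδⱼₘ. -/

import Mathlib

def kbr1 {V : Type*} [AddCommGroup V] (A : V → V) (B : V → V → V) : V → V → V :=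
  fun x y => A (B x y) - B (A x) y - B x (A y)

def kbr2 {V : Type*} [AddCommGroup V] (B C : V → V → V) : V → V → V → V :=
  fun x y z => B (C x y) z + B x (C y z) + B y (C x z)
    - C (B x y) z - C x (B y z) - C y (B x z)

def IsTerminal {V : Type*} [AddCommGroup V] (P : V → V → V) : Prop :=
  ∀ a x y z, kbr2 (kbr1 (fun w => P a w) P) P x y z = 0

def LeftLeibniz {V : Type*} [AddCommGroup V] (P : V → V → V) : Prop :=
  ∀ a x y, P a (P x y) = P (P a x) y + P x (P a y)

/-- T⁴₃₇: basis `e₁,…,e₄`, nonzero products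
`e₁e₁ = e₂`, `e₁e₂ = e₃`, `e₁e₃ = e₄`, `e₂e₁ = e₄`. -/
def mulT437 (x y : Fin 4 → ℂ) : Fin 4 → ℂ :=
  (x 0 * y 0) • (Pi.single 1 1 : Fin 4 → ℂ) + (x 0 * y 1) • (Pi.single 2 1 : Fin 4 → ℂ)
    + (x 0 * y 2 + x 1 * y 0) • (Pi.single 3 1 : Fin 4 → ℂ)

/-- T³*₀₅: basis `e₁,e₂,e₃`, nonzero products `e₁e₁ = e₂`, `e₁e₂ = e₃`. -/
def mulT3s05 (x y : Fin 3 → ℂ) : Fin 3 → ℂ :=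
  (x 0 * y 0) • (Pi.single 1 1 : Fin 3 → ℂ) + (x 0 * y 1) • (Pi.single 2 1 : Fin 3 → ℂ)

/-- The cocycle `θ = Δ₁₃ + Δ₂₁` on T³*₀₅. -/
def θ1321 (x y : Fin 3 → ℂ) : ℂ := x 0 * y 2 + x 1 * y 0

/-! For `a ∈ T⁴₃₇` the defect `kbr1 (L_a)` of left multiplication being a derivation is
`(x, y) ↦ -a₁x₁y₁ e₄`. It takes values in the annihilator `ℂ e₄` and vanishes as soon as one
argument is a product (products have no `e₁`-component), so every term of the second Kantor
bracket vanishes and the algebra is terminal. At `a = x = y = e₁` the defect is `-e₄ ≠ 0`, so the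
algebra is not left Leibniz. Splitting off the `e₄`-coordinate exhibits it as the central
extension of T³*₀₅ by `θ`. -/

theorem kbr2_eq_zero_of_forall_mul_eq_zero {V : Type*} [AddCommGroup V] {B P : V → V → V}
    (hBl : ∀ x y z, B (P x y) z = 0) (hBr : ∀ x y z, B x (P y z) = 0)
    (hPl : ∀ x y z, P (B x y) z = 0) (hPr : ∀ x y z, P x (B y z) = 0) (x y z : V) :
    kbr2 B P x y z = 0 := by
  simp only [kbr2, hBl, hBr, hPl, hPr, add_zero, sub_zero]

theorem leftLeibniz_iff_kbr1_eq_zero {V : Type*} [AddCommGroup V] (P : V → V → V) :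
    LeftLeibniz P ↔ ∀ a x y, kbr1 (fun w => P a w) P x y = 0 := by
  simp only [LeftLeibniz, kbr1, sub_sub, sub_eq_zero]

@[simps]
def Fin.initLastLinearEquiv (R : Type*) [Semiring R] (n : ℕ) :
    (Fin (n + 1) → R) ≃ₗ[R] (Fin n → R) × R where
  toFun x := (Fin.init x, x (Fin.last n))
  invFun p := Fin.snoc p.1 p.2
  map_add' _ _ := rfl
  map_smul' _ _ := rfl
  left_inv x := Fin.snoc_init_self x
  right_inv p := by simp

theorem mulT437_apply (x y : Fin 4 → ℂ) :
    mulT437 x y = ![0, x 0 * y 0, x 0 * y 1, x 0 * y 2 + x 1 * y 0] := by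
  funext i
  fin_cases i <;> simp [mulT437]

theorem mulT3s05_apply (x y : Fin 3 → ℂ) :
    mulT3s05 x y = ![0, x 0 * y 0, x 0 * y 1] := by
  funext i
  fin_cases i <;> simp [mulT3s05]

theorem mulT437_eq_snoc (x y : Fin 4 → ℂ) :
    mulT437 x y =
      Fin.snoc (mulT3s05 (Fin.init x) (Fin.init y)) (θ1321 (Fin.init x) (Fin.init y)) := by
  funext i
  refine Fin.lastCases ?_ (fun j => ?_) i
  · rw [Fin.snoc_last]
    simp [mulT437_apply, θ1321, Fin.init]
  · fin_cases j <;> simp [mulT437_apply, mulT3s05_apply, Fin.init]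

theorem mulT437_apply_zero (x y : Fin 4 → ℂ) : mulT437 x y 0 = 0 := by
  simp [mulT437_apply]

theorem mulT437_single_three_left (x : Fin 4 → ℂ) (c : ℂ) : mulT437 (Pi.single 3 c) x = 0 := by
  funext i
  fin_cases i <;> simp [mulT437_apply]

theorem mulT437_single_three_right (x : Fin 4 → ℂ) (c : ℂ) : mulT437 x (Pi.single 3 c) = 0 := by
  funext i
  fin_cases i <;> simp [mulT437_apply]

theorem kbr1_mulT437 (a x y : Fin 4 → ℂ) :
    kbr1 (fun w => mulT437 a w) mulT437 x y = Pi.single 3 (-(a 0 * x 0 * y 0)) := by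
  funext i
  fin_cases i <;> simp [kbr1, mulT437_apply] <;> ring

theorem isTerminal_mulT437 : IsTerminal mulT437 := fun a =>
  kbr2_eq_zero_of_forall_mul_eq_zero
    (by simp [kbr1_mulT437, mulT437_apply_zero]) (by simp [kbr1_mulT437, mulT437_apply_zero])
    (by simp [kbr1_mulT437, mulT437_single_three_left])
    (by simp [kbr1_mulT437, mulT437_single_three_right])

theorem not_leftLeibniz_mulT437 : ¬ LeftLeibniz mulT437 := by
  rw [leftLeibniz_iff_kbr1_eq_zero]
  intro h
  have he₄ := congrFun (h (Pi.single 0 1) (Pi.single 0 1) (Pi.single 0 1)) 3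
  simp [kbr1_mulT437] at he₄

/-- T⁴₃₇ is terminal, not left Leibniz, and is isomorphic to the one-dimensional
central extension `(T³*₀₅)_θ` with `θ = Δ₁₃ + Δ₂₁`. -/
theorem stmt17 :
    IsTerminal mulT437 ∧ ¬ LeftLeibniz mulT437 ∧
    ∃ φ : (Fin 4 → ℂ) ≃ₗ[ℂ] ((Fin 3 → ℂ) × ℂ),
      ∀ a b, φ (mulT437 a b)
        = ((mulT3s05 (φ a).1 (φ b).1, θ1321 (φ a).1 (φ b).1) : (Fin 3 → ℂ) × ℂ) := by
  refine ⟨isTerminal_mulT437, not_leftLeibniz_mulT437, Fin.initLastLinearEquiv ℂ 3, fun a b => ?_⟩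
  simp only [Fin.initLastLinearEquiv_apply, mulT437_eq_snoc, Fin.init_snoc, Fin.snoc_last]
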